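/- arXiv:2111.13258 — 3 statements merged into one kernel-verified Lean document; each statement's English description precedes it below -/
import Mathlib

section
/- Density of domains (Lemma 4.1(c)): Under the standing setting (complete geodesic metric space (E,d), proper lower semicontinuous energy 𝓔, an EVI_κ gradient flow S of 𝓔 on E), the domain D(I) := {π ∈ E : I(π) < +∞} of the information functional is dense in D(𝓔) (i.e., the topological closure of D(I) contains D(𝓔)) and is dense in E; in particular, D(𝓔) is dense in E. -/
open Filter Topology MeasureTheory
open scoped ENNReal

noncomputable section

/-- Upper right Dini derivative (EReal-valued). -/
def diniUR (φ : ℝ → ℝ) (t : ℝ) : EReal :=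
  Filter.limsup (fun h : ℝ => (((φ (t + h) - φ t) / h : ℝ) : EReal)) (𝓝[>] (0 : ℝ))

/-- A geodesic metric space: any two points are joined by a constant speed geodesic. -/
def GeodesicSpace (E : Type*) [MetricSpace E] : Prop :=
  ∀ ρ π : E, ∃ γ : ℝ → E, γ 0 = ρ ∧ γ 1 = π ∧
    ∀ s ∈ Set.Icc (0:ℝ) 1, ∀ t ∈ Set.Icc (0:ℝ) 1,
      dist (γ s) (γ t) = |t - s| * dist ρ π

/-- A continuous curve `γ : [0,∞) → E` with `γ((0,∞)) ⊆ D(𝓔)` solving the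
evolution variational inequality EVI_κ. -/
def IsEVISolution {E : Type*} [MetricSpace E] (En : E → EReal) (κ : ℝ) (γ : ℝ → E) : Prop :=
  ContinuousOn γ (Set.Ici (0:ℝ)) ∧
  (∀ t : ℝ, 0 < t → En (γ t) < ⊤) ∧
  ∀ ρ : E, En ρ < ⊤ → ∀ t : ℝ, 0 ≤ t →
    (1/2 : EReal) * diniUR (fun s => dist (γ s) ρ ^ 2) t ≤
      En ρ - En (γ t) - ((κ / 2 * dist (γ t) ρ ^ 2 : ℝ) : EReal)

/-- An EVI_κ gradient flow of `En` defined on all of `E`. -/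
structure IsEVIFlow {E : Type*} [MetricSpace E] (En : E → EReal) (κ : ℝ) (S : ℝ → E → E) : Prop where
  cont : ∀ t : ℝ, 0 ≤ t → Continuous (S t)
  id0 : ∀ π : E, S 0 π = π
  semigroup : ∀ (π : E) (s t : ℝ), 0 ≤ s → 0 ≤ t → S (t + s) π = S s (S t π)
  evi : ∀ π : E, IsEVISolution En κ (fun t => S t π)

open Classical in
/-- The local slope `|∂𝓔|(ρ)`. -/
def localSlope {E : Type*} [MetricSpace E] (En : E → EReal) (ρ : E) : ℝ≥0∞ :=
  if En ρ = ⊤ then ⊤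
  else Filter.limsup (fun π : E => ENNReal.ofReal ((En ρ - En π).toReal / dist ρ π)) (𝓝[≠] ρ)

/-- The information functional `I = |∂𝓔|²`. -/
def info {E : Type*} [MetricSpace E] (En : E → EReal) (π : E) : ℝ≥0∞ := (localSlope En π) ^ 2

/-- The (modified) Tataru distance `d_T(π,ρ) = inf_{t ≥ 0} { t + e^{κ̂ t} d(π, S(t)ρ) }`,
where `κ̂ = min κ 0`. -/
def tataru {E : Type*} [MetricSpace E] (S : ℝ → E → E) (κ : ℝ) (π ρ : E) : ℝ :=
  sInf {x : ℝ | ∃ t : ℝ, 0 ≤ t ∧ x = t + Real.exp (min κ 0 * t) * dist π (S t ρ)}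

end


section AuxLemmas

theorem my_ekeland {X : Type*} [MetricSpace X] [CompleteSpace X] (g : X → ℝ)
    (hg : LowerSemicontinuous g) (m : ℝ) (hm : ∀ x, m ≤ g x)
    (lam : ℝ) (hlam : 0 < lam) (p : X) :
    ∃ q : X, lam * dist p q ≤ g p - g q ∧ ∀ x, g q - lam * dist x q ≤ g x := by
  set R : X → X → Prop := fun y x => g y + lam * dist y x ≤ g x with hR
  have hRrefl : ∀ x, R x x := by intro x; simp [hR]
  have hRtrans : ∀ z y x, R z y → R y x → R z x := by
    intro z y x h1 h2
    have htri := dist_triangle z y x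
    simp only [hR] at *
    nlinarith
  have hchoice : ∀ (x : X) (n : ℕ), ∃ y, R y x ∧ ∀ z, R z x → g y ≤ g z + (1/2)^n := by
    intro x n
    set s := {v : ℝ | ∃ z, R z x ∧ v = g z} with hs
    have hsne : s.Nonempty := ⟨g x, x, hRrefl x, rfl⟩
    have hsbd : BddBelow s := ⟨m, by rintro v ⟨z, _, rfl⟩; exact hm z⟩
    have hpos : (0:ℝ) < (1/2)^n := by positivity
    obtain ⟨v, hvs, hv⟩ : ∃ v ∈ s, v < sInf s + (1/2)^n :=
      exists_lt_of_csInf_lt hsne (by linarith)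
    obtain ⟨z, hz, rfl⟩ := hvs
    exact ⟨z, hz, fun w hw => by
      have : sInf s ≤ g w := csInf_le hsbd ⟨w, hw, rfl⟩
      linarith⟩
  choose nxt hnxt1 hnxt2 using hchoice
  let seq : ℕ → X := fun n => Nat.rec p (fun k xk => nxt xk k) n
  have hseq0 : seq 0 = p := rfl
  have hseqS : ∀ n, seq (n+1) = nxt (seq n) n := fun n => rfl
  have hstep : ∀ n, R (seq (n+1)) (seq n) := fun n => by rw [hseqS]; exact hnxt1 _ _
  have hchain : ∀ n k, R (seq (n+k)) (seq n) := by
    intro n k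
    induction k with
    | zero => exact hRrefl _
    | succ k ih => exact hRtrans _ _ _ (hstep (n+k)) ih
  have hchain' : ∀ n k, n ≤ k → R (seq k) (seq n) := by
    intro n k hnk
    obtain ⟨j, rfl⟩ := Nat.exists_eq_add_of_le hnk
    exact hchain n j
  have ganti : ∀ n k, n ≤ k → g (seq k) ≤ g (seq n) := by
    intro n k hnk
    have := hchain' n k hnk
    simp only [hR] at this
    nlinarith [dist_nonneg (x := seq k) (y := seq n)]
  have hbdd : BddBelow (Set.range fun n => g (seq n)) := ⟨m, by rintro v ⟨n, rfl⟩; exact hm _⟩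
  set L := ⨅ n, g (seq n) with hLdef
  have hL : Tendsto (fun n => g (seq n)) atTop (𝓝 L) :=
    tendsto_atTop_ciInf (fun a b hab => ganti a b hab) hbdd
  have hLle : ∀ n, L ≤ g (seq n) := fun n => ciInf_le hbdd n
  have hcauchy : CauchySeq seq := by
    apply cauchySeq_of_le_tendsto_0 (b := fun N => (g (seq N) - L)/lam)
    · intro n k N hn hk
      rcases le_total n k with h | h
      · have h1 := hchain' n k h
        simp only [hR] at h1
        have h2 : g (seq n) ≤ g (seq N) := ganti N n hn
        have h3 : L ≤ g (seq k) := hLle k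
        rw [dist_comm]
        rw [le_div_iff₀ hlam]
        nlinarith
      · have h1 := hchain' k n h
        simp only [hR] at h1
        have h2 : g (seq k) ≤ g (seq N) := ganti N k hk
        have h3 : L ≤ g (seq n) := hLle n
        rw [le_div_iff₀ hlam]
        nlinarith
    · have := (hL.sub_const L).div_const lam
      simpa using this
  obtain ⟨q, hq⟩ := cauchySeq_tendsto_of_complete hcauchy
  have hRq : ∀ n, R q (seq n) := by
    intro n
    have hforall : ∀ c, c < g q → c ≤ g (seq n) - lam * dist q (seq n) := by
      intro c hc
      have h1 : ∀ᶠ k in atTop, c < g (seq k) := hq.eventually (hg q c hc)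
      have h2 : ∀ᶠ k in atTop, n ≤ k := eventually_ge_atTop n
      have h3 : ∀ᶠ k in atTop, lam * dist (seq k) (seq n) ≤ g (seq n) - c := by
        filter_upwards [h1, h2] with k hk1 hk2
        have := hchain' n k hk2
        simp only [hR] at this
        linarith
      have h4 : Tendsto (fun k => lam * dist (seq k) (seq n)) atTop
          (𝓝 (lam * dist q (seq n))) :=
        tendsto_const_nhds.mul (hq.dist tendsto_const_nhds)
      have h5 : lam * dist q (seq n) ≤ g (seq n) - c := le_of_tendsto h4 h3
      linarith
    have hq' : g q ≤ g (seq n) - lam * dist q (seq n) := by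
      by_contra hcon
      push_neg at hcon
      have := hforall ((g (seq n) - lam * dist q (seq n) + g q)/2) (by linarith)
      linarith
    simp only [hR]
    linarith
  refine ⟨q, ?_, ?_⟩
  · have := hRq 0
    simp only [hR, hseq0] at this
    rw [dist_comm]
    linarith
  · intro x
    by_contra h'
    push_neg at h'
    have hxq : R x q := by
      simp only [hR]
      nlinarith [dist_nonneg (x := x) (y := q)]
    have hxn : ∀ n, R x (seq n) := fun n => hRtrans x q (seq n) hxq (hRq n)
    have key : ∀ n : ℕ, g q ≤ g x + (1/2)^n := by
      intro n
      have h1 : g (seq (n+1)) ≤ g x + (1/2)^n := by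
        rw [hseqS]; exact hnxt2 (seq n) n x (hxn n)
      have h2 : g q ≤ g (seq (n+1)) := by
        have := hRq (n+1)
        simp only [hR] at this
        nlinarith [dist_nonneg (x := q) (y := seq (n+1))]
      linarith
    have hgq : g q ≤ g x := by
      have htend : Tendsto (fun n : ℕ => g x + (1/2:ℝ)^n) atTop (𝓝 (g x + 0)) :=
        tendsto_const_nhds.add (tendsto_pow_atTop_nhds_zero_of_lt_one (by norm_num) (by norm_num))
      rw [add_zero] at htend
      exact le_of_tendsto_of_tendsto' tendsto_const_nhds htend key
    nlinarith [dist_nonneg (x := x) (y := q)]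

theorem lsc_exists_min {e : ℝ → ℝ} {K : Set ℝ} (hK : IsCompact K) (hne : K.Nonempty)
    (he : LowerSemicontinuousOn e K) : ∃ x ∈ K, ∀ y ∈ K, e x ≤ e y := by
  by_cases hbdd : BddBelow (e '' K)
  · set m := sInf (e '' K) with hm
    have himne : (e '' K).Nonempty := hne.image e
    have hseq : ∀ n : ℕ, ∃ y ∈ K, e y < m + 1/(n+1) := by
      intro n
      have hp : (0:ℝ) < 1/(n+1) := by positivity
      obtain ⟨v, hv, hv'⟩ := exists_lt_of_csInf_lt himne (show m < m + 1/(n+1) by linarith)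
      obtain ⟨y, hy, rfl⟩ := hv
      exact ⟨y, hy, hv'⟩
    choose y hyK hyv using hseq
    obtain ⟨x, hxK, φ, hφ, hφt⟩ := hK.tendsto_subseq hyK
    refine ⟨x, hxK, ?_⟩
    have hxm : e x ≤ m := by
      by_contra hcon
      push_neg at hcon
      obtain ⟨c, hc1, hc2⟩ := exists_between hcon
      have h1 : ∀ᶠ k in atTop, c < e (y (φ k)) := by
        have htw : Tendsto (fun k => y (φ k)) atTop (𝓝[K] x) :=
          tendsto_nhdsWithin_of_tendsto_nhds_of_eventually_within _ hφt
            (Eventually.of_forall fun k => hyK (φ k))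
        exact htw.eventually (he x hxK c hc2)
      obtain ⟨n, hn1, hn2⟩ := (h1.and (eventually_ge_atTop
        (Nat.ceil (1/(c - m))))).exists
      have hφn : (n:ℝ) ≤ φ n := by exact_mod_cast (hφ.le_apply)
      have h3 : e (y (φ n)) < m + 1/(φ n + 1) := hyv (φ n)
      have h4 : 1/((φ n : ℝ)+1) ≤ 1/((n:ℝ)+1) := by
        apply one_div_le_one_div_of_le (by positivity) (by linarith)
      have h5 : 1/(c-m) ≤ (n:ℝ) := by
        calc (1/(c-m) : ℝ) ≤ (Nat.ceil (1/(c-m)) : ℝ) := Nat.le_ceil _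
        _ ≤ n := by exact_mod_cast hn2
      have hcm : 0 < c - m := by linarith
      have h6 : 1/((n:ℝ)+1) < c - m := by
        rw [div_lt_iff₀ (by positivity)]
        have : 1/(c-m) < (n:ℝ)+1 := by linarith
        calc (1:ℝ) = (c-m) * (1/(c-m)) := by field_simp
        _ < (c-m) * ((n:ℝ)+1) := by
            apply mul_lt_mul_of_pos_left this hcm
      linarith
    intro y hy
    exact hxm.trans (csInf_le hbdd ⟨y, hy, rfl⟩)
  · exfalso
    have hseq : ∀ n : ℕ, ∃ y ∈ K, e y < -n := by
      intro n
      by_contra hcon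
      push_neg at hcon
      exact hbdd ⟨-n, by rintro v ⟨z, hz, rfl⟩; exact hcon z hz⟩
    choose y hyK hyv using hseq
    obtain ⟨x, hxK, φ, hφ, hφt⟩ := hK.tendsto_subseq hyK
    have h1 : ∀ᶠ k in atTop, e x - 1 < e (y (φ k)) := by
      have htw : Tendsto (fun k => y (φ k)) atTop (𝓝[K] x) :=
        tendsto_nhdsWithin_of_tendsto_nhds_of_eventually_within _ hφt
          (Eventually.of_forall fun k => hyK (φ k))
      exact htw.eventually (he x hxK (e x - 1) (by linarith))
    obtain ⟨n, hn1, hn2⟩ := (h1.and (eventually_ge_atTop (Nat.ceil (|e x| + 1)))).exists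
    have hφn : (n:ℝ) ≤ φ n := by exact_mod_cast (hφ.le_apply)
    have h3 : e (y (φ n)) < -(φ n : ℝ) := hyv (φ n)
    have h5 : |e x| + 1 ≤ (n:ℝ) := (Nat.le_ceil _).trans (by exact_mod_cast hn2)
    have := abs_le.mp (le_refl |e x|)
    linarith [this.1, this.2]

theorem half_mul_le {x : EReal} {r : ℝ} (h : (1/2 : EReal) * x ≤ ((r : ℝ) : EReal)) :
    x ≤ ((2 * r : ℝ) : EReal) := by
  have hhalf : (1/2 : EReal) = (((1:ℝ)/2 : ℝ) : EReal) := by norm_cast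
  induction x using EReal.rec with
  | bot => exact bot_le
  | coe y =>
    rw [hhalf, ← EReal.coe_mul] at h
    have hy : (1:ℝ)/2 * y ≤ r := EReal.coe_le_coe_iff.mp h
    exact EReal.coe_le_coe_iff.mpr (by linarith)
  | top =>
    exfalso
    rw [hhalf, EReal.coe_mul_top_of_pos (show (0:ℝ) < 1/2 by norm_num)] at h
    exact (EReal.coe_lt_top r).not_ge h

theorem diniUR_le_const_imp {f : ℝ → ℝ} {a b C : ℝ} (hab : a ≤ b)
    (hf : ContinuousOn f (Set.Icc a b))
    (hd : ∀ x ∈ Set.Ico a b, diniUR f x ≤ (C : EReal)) :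
    f b ≤ f a + C * (b - a) := by
  have key : ∀ x ∈ Set.Icc a b, f x ≤ f a + C * (x - a) := by
    apply image_le_of_liminf_slope_right_le_deriv_boundary hf
    · simp
    · exact (continuousOn_const.add (continuousOn_const.mul
        (continuousOn_id.sub continuousOn_const)))
    · intro x _
      have : HasDerivWithinAt (fun y => f a + C * (y - a)) (C * 1) (Set.Ici x) x :=
        (((hasDerivWithinAt_id x (Set.Ici x)).sub_const a).const_mul C).const_add (f a)
      simpa using this
    · intro x hx r hr
      have h1 : diniUR f x < (r : EReal) := lt_of_le_of_lt (hd x hx) (by exact_mod_cast hr)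
      have h2 : ∀ᶠ h in 𝓝[>] (0:ℝ), (((f (x + h) - f x) / h : ℝ) : EReal) < (r : EReal) :=
        eventually_lt_of_limsup_lt h1
      have htends : Tendsto (fun z : ℝ => z - x) (𝓝[>] x) (𝓝[>] (0:ℝ)) := by
        apply tendsto_nhdsWithin_of_tendsto_nhds_of_eventually_within
        · have : Tendsto (fun z : ℝ => z - x) (𝓝 x) (𝓝 (x - x)) :=
            (continuous_id.sub continuous_const).tendsto x
          rw [sub_self] at this
          exact this.mono_left nhdsWithin_le_nhds
        · exact eventually_nhdsWithin_of_forall fun z hz => Set.mem_Ioi.mpr (sub_pos.mpr hz)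
      have h3 : ∀ᶠ z in 𝓝[>] x, (((f (x + (z - x)) - f x) / (z - x) : ℝ) : EReal) < (r : EReal) :=
        htends.eventually h2
      apply Eventually.frequently
      filter_upwards [h3] with z hz
      rw [slope_def_field]
      have : x + (z - x) = z := by ring
      rw [this] at hz
      exact_mod_cast hz
  have := key b ⟨hab, le_refl b⟩
  linarith

theorem evi_dini_real {X : Type*} [MetricSpace X] {En : X → EReal} {κ : ℝ} {γ : ℝ → X}
    (hevi : ∀ ρ : X, En ρ < ⊤ → ∀ t : ℝ, 0 ≤ t →
      (1/2 : EReal) * diniUR (fun s => dist (γ s) ρ ^ 2) t ≤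
        En ρ - En (γ t) - ((κ / 2 * dist (γ t) ρ ^ 2 : ℝ) : EReal))
    {ρ : X} (hρ : En ρ < ⊤) (hρ' : En ρ ≠ ⊥) {t : ℝ} (ht : 0 ≤ t)
    (ht1 : En (γ t) < ⊤) (ht2 : En (γ t) ≠ ⊥) :
    diniUR (fun s => dist (γ s) ρ ^ 2) t ≤
      ((2 * ((En ρ).toReal - (En (γ t)).toReal) - κ * dist (γ t) ρ ^ 2 : ℝ) : EReal) := by
  have h := hevi ρ hρ t ht
  set b := (En ρ).toReal with hb
  set c := (En (γ t)).toReal with hc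
  have hEρ : En ρ = ((b : ℝ) : EReal) := (EReal.coe_toReal hρ.ne hρ').symm
  have hEγ : En (γ t) = ((c : ℝ) : EReal) := (EReal.coe_toReal ht1.ne ht2).symm
  rw [hEρ, hEγ] at h
  have hrhs : ((b:ℝ) : EReal) - ((c:ℝ):EReal) - ((κ / 2 * dist (γ t) ρ ^ 2 : ℝ) : EReal)
      = ((b - c - κ / 2 * dist (γ t) ρ ^ 2 : ℝ) : EReal) := by
    norm_cast
  rw [hrhs] at h
  have key := half_mul_le h
  have heq : (2 * (b - c - κ / 2 * dist (γ t) ρ ^ 2) : ℝ)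
      = 2 * ((En ρ).toReal - (En (γ t)).toReal) - κ * dist (γ t) ρ ^ 2 := by
    rw [← hb, ← hc]; ring
  rw [heq] at key
  exact key

theorem record_point {e : ℝ → ℝ} {a : ℝ}
    (he : LowerSemicontinuousOn e (Set.Icc a (a+2))) :
    ∃ t₀ ∈ Set.Ico a (a+1), ∃ K : ℝ, 0 ≤ K ∧ ∃ δ : ℝ, 0 < δ ∧ t₀ + δ ≤ a + 2 ∧
      ∀ h ∈ Set.Ioc (0:ℝ) δ, ∀ r ∈ Set.Icc t₀ (t₀ + h), e t₀ - K * h ≤ e r := by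
  classical
  -- running minimum
  have hsub : ∀ t, a ≤ t → t ≤ a + 2 → Set.Icc a t ⊆ Set.Icc a (a+2) := by
    intro t _ ht2
    exact Set.Icc_subset_Icc le_rfl ht2
  have hattain : ∀ t, a ≤ t → t ≤ a + 2 → ∃ x ∈ Set.Icc a t, ∀ y ∈ Set.Icc a t, e x ≤ e y := by
    intro t ht1 ht2
    exact lsc_exists_min isCompact_Icc (Set.nonempty_Icc.mpr ht1)
      (he.mono (hsub t ht1 ht2))
  set w : ℝ → ℝ := fun t => sInf (e '' Set.Icc a t) with hw
  have hwne : ∀ t, a ≤ t → (e '' Set.Icc a t).Nonempty := fun t ht =>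
    (Set.nonempty_Icc.mpr ht).image e
  have hwbdd : ∀ t, a ≤ t → t ≤ a + 2 → BddBelow (e '' Set.Icc a t) := by
    intro t ht1 ht2
    obtain ⟨x, hx, hmin⟩ := hattain t ht1 ht2
    exact ⟨e x, by rintro v ⟨z, hz, rfl⟩; exact hmin z hz⟩
  have hwattain : ∀ t, a ≤ t → t ≤ a + 2 → ∃ x ∈ Set.Icc a t, e x = w t := by
    intro t ht1 ht2
    obtain ⟨x, hx, hmin⟩ := hattain t ht1 ht2
    refine ⟨x, hx, le_antisymm ?_ (csInf_le (hwbdd t ht1 ht2) ⟨x, hx, rfl⟩)⟩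
    exact le_csInf (hwne t ht1) (by rintro v ⟨z, hz, rfl⟩; exact hmin z hz)
  have hwle : ∀ t, a ≤ t → t ≤ a + 2 → ∀ y ∈ Set.Icc a t, w t ≤ e y := by
    intro t ht1 ht2 y hy
    exact csInf_le (hwbdd t ht1 ht2) ⟨y, hy, rfl⟩
  have hwanti : ∀ s t, a ≤ s → s ≤ t → t ≤ a + 2 → w t ≤ w s := by
    intro s t hs hst ht
    apply le_csInf (hwne s hs)
    rintro v ⟨z, hz, rfl⟩
    exact hwle t (hs.trans hst) ht z (Set.Icc_subset_Icc le_rfl hst hz)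
  by_cases hcd : ∃ c ∈ Set.Icc a (a+1), ∃ d ∈ Set.Icc a (a+1), c < d ∧ w d = w c
  · obtain ⟨c, hc, d, hd, hcd', hwcd⟩ := hcd
    obtain ⟨t₀, ht₀, ht₀v⟩ := hwattain c hc.1 (by linarith [hc.2])
    refine ⟨t₀, ⟨ht₀.1, lt_of_le_of_lt ht₀.2 (lt_of_lt_of_le hcd' hd.2)⟩, 0, le_rfl,
      d - t₀, by linarith [ht₀.2], by linarith [hd.2], ?_⟩
    intro h hh r hr
    have hrd : r ∈ Set.Icc a d := ⟨ht₀.1.trans hr.1, hr.2.trans (by linarith [hh.2])⟩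
    have : w d ≤ e r := hwle d (hd.1) (by linarith [hd.2]) r hrd
    rw [hwcd, ← ht₀v] at this
    linarith
  · push_neg at hcd
    -- w is strictly decreasing on [a, a+1]; every point of (a, a+1] is a record point
    have hstrict : ∀ c ∈ Set.Icc a (a+1), ∀ d ∈ Set.Icc a (a+1), c < d → w d < w c := by
      intro c hc d hd h
      exact lt_of_le_of_ne (hwanti c d hc.1 h.le (by linarith [hd.2])) (hcd c hc d hd h)
    have hrec : ∀ t ∈ Set.Ioc a (a+1), e t = w t := by
      intro t ht
      have hta : a < t := ht.1
      have ht2 : t ≤ a + 2 := by linarith [ht.2]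
      -- build a sequence of minimizers converging to t
      have hyn : ∀ n : ℕ, ∃ y, y ∈ Set.Icc a t ∧ e y = w t ∧ t - 1/(n+1) < y := by
        intro n
        set s : ℝ := max a (t - 1/(n+1)) with hs
        have hs1 : a ≤ s := le_max_left _ _
        have hst : s < t := by
          apply max_lt hta
          have : (0:ℝ) < 1/(n+1) := by positivity
          linarith
        obtain ⟨y, hy, hyv⟩ := hwattain t hta.le ht2
        have hws : w t < w s := hstrict s ⟨hs1, by linarith [ht.2]⟩ t ⟨hta.le, ht.2⟩ hst
        have hys : s < y := by
          by_contra hcon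
          push_neg at hcon
          have : w s ≤ e y := hwle s hs1 (by linarith [ht.2]) y ⟨hy.1, hcon⟩
          rw [hyv] at this
          linarith
        refine ⟨y, hy, hyv, ?_⟩
        calc t - 1/(n+1) ≤ s := le_max_right _ _
        _ < y := hys
      choose y hy1 hy2 hy3 using hyn
      have hty : Tendsto y atTop (𝓝 t) := by
        have hlow : Tendsto (fun n : ℕ => t - 1/((n:ℝ)+1)) atTop (𝓝 (t - 0)) :=
          tendsto_const_nhds.sub (tendsto_one_div_add_atTop_nhds_zero_nat)
        rw [sub_zero] at hlow
        apply tendsto_of_tendsto_of_tendsto_of_le_of_le hlow tendsto_const_nhds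
        · intro n; exact (hy3 n).le
        · intro n; exact (hy1 n).2
      have htyw : Tendsto y atTop (𝓝[Set.Icc a (a+2)] t) :=
        tendsto_nhdsWithin_of_tendsto_nhds_of_eventually_within _ hty
          (Eventually.of_forall fun n => hsub t hta.le ht2 (hy1 n))
      -- lower semicontinuity
      have hle : e t ≤ w t := by
        by_contra hcon
        push_neg at hcon
        obtain ⟨c, hc1, hc2⟩ := exists_between hcon
        have := (htyw.eventually (he t ⟨hta.le, ht2⟩ c hc2)).exists
        obtain ⟨n, hn⟩ := this
        rw [hy2 n] at hn
        linarith
      exact le_antisymm hle (hwle t hta.le ht2 t ⟨hta.le, le_refl t⟩)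
    -- differentiability of the clamped running min
    set W : ℝ → ℝ := fun t => w (max a (min t (a+1))) with hW
    have hWanti : Antitone W := by
      intro s t hst
      apply hwanti
      · exact le_max_left _ _
      · exact max_le_max le_rfl (min_le_min hst le_rfl)
      · apply max_le (by linarith) (le_trans (min_le_right _ _) (by linarith))
    have hWdiff : ∀ᵐ x, DifferentiableAt ℝ W x := by
      have : Monotone (fun x => -W x) := fun s t hst => neg_le_neg (hWanti hst)
      filter_upwards [this.ae_differentiableAt] with x hx
      have := hx.neg
      simpa using this
    obtain ⟨t₀, ht₀I, ht₀d⟩ : ∃ t₀ ∈ Set.Ioo a (a+1), DifferentiableAt ℝ W t₀ := by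
      by_contra hcon
      push_neg at hcon
      have hsub2 : Set.Ioo a (a+1) ⊆ {x | ¬ DifferentiableAt ℝ W x} := fun x hx => hcon x hx
      have h0 : volume {x | ¬ DifferentiableAt ℝ W x} = 0 := by
        rw [← MeasureTheory.ae_iff] at *
        exact hWdiff
      have := measure_mono_null hsub2 h0
      simp [Real.volume_Ioo] at this
      
    have hd := ht₀d.hasDerivAt
    set d₀ := deriv W t₀ with hd₀
    have hslope : Tendsto (slope W t₀) (𝓝[≠] t₀) (𝓝 d₀) :=
      hasDerivAt_iff_tendsto_slope.mp hd
    have hev : ∀ᶠ z in 𝓝[≠] t₀, |slope W t₀ z - d₀| < 1 := by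
      have : Set.Ioo (d₀ - 1) (d₀ + 1) ∈ 𝓝 d₀ := Ioo_mem_nhds (by linarith) (by linarith)
      filter_upwards [hslope this] with z hz
      rw [abs_lt]
      exact ⟨by linarith [hz.1], by linarith [hz.2]⟩
    rw [eventually_nhdsWithin_iff, Metric.eventually_nhds_iff] at hev
    obtain ⟨ε, hε, hev⟩ := hev
    set δ := min (ε/2) ((a + 1 - t₀)/2) with hδ
    have hδpos : 0 < δ := lt_min (by linarith) (by linarith [ht₀I.2])
    refine ⟨t₀, ⟨ht₀I.1.le, ht₀I.2⟩, |d₀| + 1, by positivity, δ, hδpos, ?_, ?_⟩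
    · have : δ ≤ (a + 1 - t₀)/2 := min_le_right _ _
      linarith
    · intro h hh r hr
      have hhδ : h ≤ δ := hh.2
      have ht₀h : t₀ + h ≤ a + 1 := by
        have : δ ≤ (a + 1 - t₀)/2 := min_le_right _ _
        linarith
      have hWeq : ∀ s ∈ Set.Icc a (a+1), W s = w s := by
        intro s hs
        simp only [hW]
        rw [min_eq_left hs.2, max_eq_right hs.1]
      -- slope bound at z = t₀ + h
      have hz : |slope W t₀ (t₀ + h) - d₀| < 1 := by
        apply hev
        · simp only [Real.dist_eq]
          rw [abs_of_pos (by linarith [hh.1] : (0:ℝ) < t₀ + h - t₀)]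
          have : δ ≤ ε/2 := min_le_left _ _
          linarith [hh.1, hh.2]
        · simp only [Set.mem_compl_iff, Set.mem_singleton_iff]
          intro hcon
          have : h = 0 := by linarith [congrArg (fun x => x - t₀) hcon]
          linarith [hh.1]
      have hslope_val : slope W t₀ (t₀ + h) = (W (t₀ + h) - W t₀)/h := by
        rw [slope_def_field]
        congr 1
        ring
      have hWbound : W t₀ - W (t₀ + h) ≤ (|d₀| + 1) * h := by
        rw [hslope_val] at hz
        have h1 := (abs_lt.mp hz).1
        have h2 : (W (t₀ + h) - W t₀)/h > d₀ - 1 := by linarith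
        have h3 : (d₀ - 1) * h < W (t₀ + h) - W t₀ := (lt_div_iff₀ hh.1).mp h2
        have h4 : -(|d₀|) ≤ d₀ := neg_abs_le d₀
        nlinarith [hh.1]
      -- conclude
      have hra : r ∈ Set.Icc a (a + 2) := ⟨ht₀I.1.le.trans hr.1, by linarith [hr.2, hh.2]⟩
      have h5 : w r ≤ e r := by
        by_contra hcon
        push_neg at hcon
        exact absurd (hwle r hra.1 hra.2 r ⟨hra.1, le_refl r⟩) (not_le.mpr hcon)
      have h6 : w (t₀ + h) ≤ w r :=
        hwanti r (t₀ + h) hra.1 hr.2 (by linarith)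
      have h7 : W (t₀ + h) = w (t₀ + h) := hWeq _ ⟨by linarith [ht₀I.1, hh.1], ht₀h⟩
      have h8 : W t₀ = w t₀ := hWeq _ ⟨ht₀I.1.le, ht₀I.2.le⟩
      have h9 : e t₀ = w t₀ := hrec t₀ ⟨ht₀I.1, ht₀I.2.le⟩
      rw [h9]
      rw [h7, h8] at hWbound
      linarith

/-! EReal helpers -/

theorem ereal_exists_real_lt {x : EReal} (hx : x ≠ ⊥) : ∃ A : ℝ, ((A : ℝ) : EReal) < x := by
  induction x using EReal.rec with
  | bot => exact absurd rfl hx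
  | coe y => exact ⟨y - 1, EReal.coe_lt_coe_iff.mpr (by linarith)⟩
  | top => exact ⟨0, EReal.coe_lt_top 0⟩

theorem ereal_lt_add_real {x : EReal} {s B : ℝ} (h : ((s : ℝ) : EReal) < x + ((B : ℝ) : EReal)) :
    ((s - B : ℝ) : EReal) < x := by
  induction x using EReal.rec with
  | bot => rw [EReal.bot_add] at h; exact absurd h (by simp)
  | coe y =>
    rw [← EReal.coe_add] at h
    exact EReal.coe_lt_coe_iff.mpr (by linarith [EReal.coe_lt_coe_iff.mp h])
  | top => exact EReal.coe_lt_top _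

theorem ereal_exists_eta {x : EReal} {s : ℝ} (h : ((s : ℝ) : EReal) < x) :
    ∃ η : ℝ, 0 < η ∧ ((s + η : ℝ) : EReal) < x := by
  induction x using EReal.rec with
  | bot => exact absurd h (by simp)
  | coe y =>
    have := EReal.coe_lt_coe_iff.mp h
    exact ⟨(y - s)/2, by linarith, EReal.coe_lt_coe_iff.mpr (by linarith)⟩
  | top => exact ⟨1, one_pos, EReal.coe_lt_top _⟩

theorem ereal_add_lt_add {x : EReal} {A B py : ℝ} (h1 : ((A : ℝ) : EReal) < x) (h2 : B < py) :
    ((A + B : ℝ) : EReal) < x + ((py : ℝ) : EReal) := by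
  induction x using EReal.rec with
  | bot => exact absurd h1 (by simp)
  | coe y =>
    rw [← EReal.coe_add]
    exact EReal.coe_lt_coe_iff.mpr (by linarith [EReal.coe_lt_coe_iff.mp h1])
  | top => rw [EReal.top_add_coe]; exact EReal.coe_lt_top _

theorem ereal_add_real_ne_bot {x : EReal} (hx : x ≠ ⊥) (r : ℝ) : x + ((r : ℝ) : EReal) ≠ ⊥ := by
  induction x using EReal.rec with
  | bot => exact absurd rfl hx
  | coe y => rw [← EReal.coe_add]; exact EReal.coe_ne_bot _
  | top => rw [EReal.top_add_coe]; simp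

theorem ereal_add_real_ne_top {x : EReal} (hx : x ≠ ⊤) (r : ℝ) : x + ((r : ℝ) : EReal) ≠ ⊤ := by
  induction x using EReal.rec with
  | bot => rw [EReal.bot_add]; exact bot_ne_top
  | coe y => rw [← EReal.coe_add]; exact EReal.coe_ne_top _
  | top => exact absurd rfl hx

theorem lsc_add_cont {X : Type*} [TopologicalSpace X] {En : X → EReal} (hbot : ∀ x, En x ≠ ⊥)
    (hlsc : LowerSemicontinuous En) {p : X → ℝ} (hp : Continuous p) :
    LowerSemicontinuous (fun x => En x + ((p x : ℝ) : EReal)) := by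
  intro x c hc
  induction c using EReal.rec with
  | bot =>
    filter_upwards with y
    exact bot_lt_iff_ne_bot.mpr (ereal_add_real_ne_bot (hbot y) (p y))
  | coe r =>
    have h1 : ((r - p x : ℝ) : EReal) < En x := ereal_lt_add_real hc
    obtain ⟨η, hη, hη'⟩ := ereal_exists_eta h1
    have h2 : ∀ᶠ y in 𝓝 x, ((r - p x + η : ℝ) : EReal) < En y := hlsc x _ hη'
    have h3 : ∀ᶠ y in 𝓝 x, p x - η/2 < p y := by
      have : Set.Ioi (p x - η/2) ∈ 𝓝 (p x) := Ioi_mem_nhds (by linarith)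
      exact hp.continuousAt.eventually_mem this
    filter_upwards [h2, h3] with y hy2 hy3
    have := ereal_add_lt_add hy2 hy3
    refine lt_of_le_of_lt ?_ this
    exact EReal.coe_le_coe_iff.mpr (by linarith)
  | top => exact absurd hc (by simp)

/-! Ekeland for EReal-valued functionals -/

theorem ekeland_ereal {X : Type*} [MetricSpace X] [CompleteSpace X] {G : X → EReal}
    (hlsc : LowerSemicontinuous G) {m : ℝ} (hm : ∀ x, ((m : ℝ) : EReal) ≤ G x)
    {p : X} (hp : G p ≠ ⊤) {lam : ℝ} (hlam : 0 < lam) :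
    ∃ q, G q ≠ ⊤ ∧ lam * dist p q ≤ (G p).toReal - (G q).toReal ∧
      ∀ x, (((G q).toReal - lam * dist x q : ℝ) : EReal) ≤ G x := by
  have hGbot : ∀ x, G x ≠ ⊥ := fun x => (lt_of_lt_of_le (EReal.bot_lt_coe m) (hm x)).ne'
  set g : X → ℝ := fun x => (min (G x) (G p)).toReal with hg
  have hmin_ne_top : ∀ x, min (G x) (G p) ≠ ⊤ := fun x =>
    (lt_of_le_of_lt (min_le_right _ _) (lt_top_iff_ne_top.mpr hp)).ne
  have hmin_ne_bot : ∀ x, min (G x) (G p) ≠ ⊥ := fun x =>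
    (lt_of_lt_of_le (EReal.bot_lt_coe m) (le_min (hm x) (hm p))).ne'
  have hkey : ∀ x, ((g x : ℝ) : EReal) = min (G x) (G p) := fun x =>
    EReal.coe_toReal (hmin_ne_top x) (hmin_ne_bot x)
  have hglsc : LowerSemicontinuous g := by
    intro x r hr
    have h1 : ((r : ℝ) : EReal) < min (G x) (G p) := by
      rw [← hkey x]
      exact EReal.coe_lt_coe_iff.mpr hr
    have h2 : ((r : ℝ) : EReal) < G x := lt_of_lt_of_le h1 (min_le_left _ _)
    have h3 : ((r : ℝ) : EReal) < G p := lt_of_lt_of_le h1 (min_le_right _ _)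
    filter_upwards [hlsc x _ h2] with y hy
    have : ((r : ℝ) : EReal) < min (G y) (G p) := lt_min hy h3
    rw [← hkey y] at this
    exact EReal.coe_lt_coe_iff.mp this
  have hgm : ∀ x, m ≤ g x := by
    intro x
    have : ((m : ℝ) : EReal) ≤ ((g x : ℝ) : EReal) := by
      rw [hkey x]; exact le_min (hm x) (hm p)
    exact EReal.coe_le_coe_iff.mp this
  obtain ⟨q, hq1, hq2⟩ := my_ekeland g hglsc m hgm lam hlam p
  have hgp : g q ≤ g p := by
    have := hq1
    nlinarith [dist_nonneg (x := p) (y := q)]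
  have hgpeq : g p = (G p).toReal := by rw [hg]; simp
  have hGq : G q ≤ G p := by
    by_contra hcon
    push_neg at hcon
    have h1 : min (G q) (G p) = G p := min_eq_right hcon.le
    have h2 : g q = g p := by rw [hg]; simp only; rw [h1, min_self]
    rw [h2] at hq1
    have hd0 : dist p q = 0 := by nlinarith [dist_nonneg (x := p) (y := q)]
    have : p = q := eq_of_dist_eq_zero hd0
    rw [this] at hcon
    exact absurd rfl hcon.ne'
  have hGqt : G q ≠ ⊤ := (lt_of_le_of_lt hGq (lt_top_iff_ne_top.mpr hp)).ne
  have hgqeq : g q = (G q).toReal := by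
    rw [hg]; simp only; rw [min_eq_left hGq]
  refine ⟨q, hGqt, ?_, ?_⟩
  · rw [← hgpeq, ← hgqeq]; exact hq1
  · intro x
    have h1 : g q - lam * dist x q ≤ g x := hq2 x
    have h2 : ((g q - lam * dist x q : ℝ) : EReal) ≤ ((g x : ℝ) : EReal) :=
      EReal.coe_le_coe_iff.mpr h1
    rw [hkey x] at h2
    rw [← hgqeq]
    exact h2.trans (min_le_left _ _)

/-! Finite slope from an Ekeland-type inequality -/

theorem slope_finite {X : Type*} [MetricSpace X] {En : X → EReal} (hbot : ∀ x, En x ≠ ⊥)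
    {ρ z : X} (hρ : En ρ ≠ ⊤) {lam c : ℝ} (hc : 0 ≤ c) (hl : 0 ≤ lam)
    (h : ∀ x, En ρ ≤ En x + ((lam * dist x ρ + c * (dist z x ^ 2 - dist z ρ ^ 2) : ℝ) : EReal)) :
    localSlope En ρ < ⊤ := by
  set Λ := lam + c * (2 * dist z ρ + 1) with hΛ
  have hzρ : (0:ℝ) ≤ dist z ρ := dist_nonneg
  have hΛ0 : 0 ≤ Λ := by nlinarith
  rw [localSlope, if_neg hρ]
  have hev : ∀ᶠ x in 𝓝[≠] ρ, ENNReal.ofReal ((En ρ - En x).toReal / dist ρ x)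
      ≤ ENNReal.ofReal Λ := by
    have hball : ∀ᶠ x in 𝓝[≠] ρ, x ∈ Metric.ball ρ 1 :=
      Filter.eventually_of_mem (nhdsWithin_le_nhds (Metric.ball_mem_nhds ρ one_pos))
        (fun x hx => hx)
    filter_upwards [hball, eventually_mem_nhdsWithin] with x hb hx
    apply ENNReal.ofReal_le_ofReal
    have hxρ : x ≠ ρ := hx
    have hd : 0 < dist ρ x := dist_pos.mpr (Ne.symm hxρ)
    by_cases hEx : En x = ⊤
    · rw [hEx]
      have : En ρ - ⊤ = ⊥ := by
        have : En ρ - ⊤ = En ρ + ⊥ := by norm_num [sub_eq_add_neg]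
        rw [this, EReal.add_bot]
      rw [this, EReal.toReal_bot, zero_div]
      exact hΛ0
    · have hExb := hbot x
      have hts : (En ρ - En x).toReal = (En ρ).toReal - (En x).toReal :=
        EReal.toReal_sub hρ (hbot ρ) hEx hExb
      rw [hts]
      rw [div_le_iff₀ hd]
      have hhx := h x
      have hcoe : En x = (((En x).toReal : ℝ) : EReal) := (EReal.coe_toReal hEx hExb).symm
      rw [hcoe, ← EReal.coe_add] at hhx
      have hρcoe : En ρ = (((En ρ).toReal : ℝ) : EReal) := (EReal.coe_toReal hρ (hbot ρ)).symm
      rw [hρcoe] at hhx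
      have hreal := EReal.coe_le_coe_iff.mp hhx
      have hd1 : dist x ρ < 1 := by
        have := hb
        rwa [Metric.mem_ball] at this
      have habs : |dist z x - dist z ρ| ≤ dist x ρ := by
        rw [dist_comm z x, dist_comm z ρ]
        exact abs_dist_sub_le x ρ z
      have h1 : dist z x - dist z ρ ≤ dist x ρ := (abs_le.mp habs).2
      have h2 : dist z x ≤ dist z ρ + dist x ρ := by linarith
      have hdd : dist ρ x = dist x ρ := dist_comm ρ x
      rw [hdd]
      have hdn : (0:ℝ) ≤ dist x ρ := dist_nonneg
      have hzx : (0:ℝ) ≤ dist z x := dist_nonneg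
      have hsq : dist z x ^ 2 - dist z ρ ^ 2 ≤ dist x ρ * (2 * dist z ρ + 1) := by
        nlinarith
      nlinarith
  calc Filter.limsup (fun x : X => ENNReal.ofReal ((En ρ - En x).toReal / dist ρ x)) (𝓝[≠] ρ)
      ≤ ENNReal.ofReal Λ := Filter.limsup_le_of_le (by isBoundedDefault) hev
    _ < ⊤ := ENNReal.ofReal_lt_top

end AuxLemmas

set_option maxHeartbeats 2000000 in
/-- Density of domains (Lemma 4.1(c)): `D(I)` is dense in `D(𝓔)` and dense in `E`;
in particular `D(𝓔)` is dense in `E`. -/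
theorem density_of_domains
    {E : Type*} [MetricSpace E] [CompleteSpace E]
    (hgeo : GeodesicSpace E)
    (En : E → EReal) (hbot : ∀ π : E, En π ≠ ⊥) (hproper : ∃ π : E, En π < ⊤)
    (hlsc : LowerSemicontinuous En)
    (κ : ℝ) (S : ℝ → E → E) (hflow : IsEVIFlow En κ S) :
    {π : E | En π < ⊤} ⊆ closure {π : E | info En π < ⊤} ∧
    Dense {π : E | info En π < ⊤} ∧
    Dense {π : E | En π < ⊤} := by
  classical
  obtain ⟨π₀, hπ₀⟩ := hproper
  obtain ⟨hcont, hfin, hineq⟩ := hflow.evi π₀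
  set γ : ℝ → E := fun t => S t π₀ with hγ
  set e : ℝ → ℝ := fun t => (En (γ t)).toReal with he
  have heq : ∀ t, e t = (En (γ t)).toReal := fun t => rfl
  -- lower semicontinuity of e on [1,3]
  have helsc : LowerSemicontinuousOn e (Set.Icc (1:ℝ) (1+2)) := by
    intro t ht c hc
    have htpos : (0:ℝ) < t := by linarith [ht.1]
    have hfin' : En (γ t) ≠ ⊤ := (hfin t htpos).ne
    have h1 : ((c:ℝ):EReal) < En (γ t) := by
      rw [← EReal.coe_toReal hfin' (hbot _)]
      exact EReal.coe_lt_coe_iff.mpr hc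
    have hγc : ContinuousWithinAt γ (Set.Icc (1:ℝ) (1+2)) t :=
      (hcont.mono (fun x hx => le_trans (by norm_num) hx.1)) t ht
    filter_upwards [hγc.eventually (hlsc (γ t) _ h1), eventually_mem_nhdsWithin]
      with s hs hsI
    have hfins : En (γ s) ≠ ⊤ := (hfin s (by linarith [hsI.1])).ne
    have : ((c:ℝ):EReal) < ((e s : ℝ) : EReal) := by
      rw [heq s, EReal.coe_toReal hfins (hbot _)]
      exact hs
    exact EReal.coe_lt_coe_iff.mp this
  obtain ⟨t₀, ht₀mem, K, hK0, δ₀, hδ₀pos, hδ₀le, hrecord⟩ := record_point helsc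
  have ht₀1 : (1:ℝ) ≤ t₀ := ht₀mem.1
  have ht₀2 : t₀ < 1 + 1 := ht₀mem.2
  have ht₀pos : (0:ℝ) < t₀ := by linarith
  -- real form of the EVI differential inequality
  have hdini : ∀ (ρ : E), En ρ < ⊤ → ∀ x : ℝ, 0 < x →
      diniUR (fun s => dist (γ s) ρ ^ 2) x ≤
        ((2 * ((En ρ).toReal - e x) - κ * dist (γ x) ρ ^ 2 : ℝ) : EReal) := by
    intro ρ hρ x hx
    have := evi_dini_real hineq hρ (hbot ρ) hx.le (hfin x hx) (hbot _)
    rw [heq x]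
    exact this
  -- speed bound at t₀
  obtain ⟨δ₁, hδ₁⟩ : ∃ x : ℝ, x = min δ₀ (1/(2*(|κ|+1))) := ⟨_, rfl⟩
  have hδ₁pos : 0 < δ₁ := by rw [hδ₁]; exact lt_min hδ₀pos (by positivity)
  have hδ₁δ₀ : δ₁ ≤ δ₀ := by rw [hδ₁]; exact min_le_left _ _
  have hδ₁κ : δ₁ ≤ 1/(2*(|κ|+1)) := by rw [hδ₁]; exact min_le_right _ _
  obtain ⟨V, hV⟩ : ∃ x : ℝ, x = 2 * Real.sqrt K := ⟨_, rfl⟩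
  have hV0 : 0 ≤ V := by rw [hV]; positivity
  have hspeed : ∀ h ∈ Set.Ioc (0:ℝ) δ₁, dist (γ (t₀ + h)) (γ t₀) ≤ V * h := by
    intro h hh
    have hh0 : 0 < h := hh.1
    have hhδ₀ : h ≤ δ₀ := le_trans hh.2 hδ₁δ₀
    have hhκ : |κ| * h ≤ 1/2 := by
      have h2 : h ≤ 1/(2*(|κ|+1)) := le_trans hh.2 hδ₁κ
      have h3 : (0:ℝ) < 2*(|κ|+1) := by positivity
      rw [le_div_iff₀ h3] at h2
      nlinarith [abs_nonneg κ]
    have hsubIci : Set.Icc t₀ (t₀ + h) ⊆ Set.Ici (0:ℝ) := fun s hs => le_trans (by linarith) hs.1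
    have hfcont : ContinuousOn (fun s => dist (γ s) (γ t₀) ^ 2) (Set.Icc t₀ (t₀ + h)) :=
      fun s hs => (((continuous_id.dist continuous_const).pow 2).continuousAt).comp_continuousWithinAt
        ((hcont.mono hsubIci) s hs)
    obtain ⟨xs, hxs, hmax⟩ := isCompact_Icc.exists_isMaxOn
      (Set.nonempty_Icc.mpr (by linarith)) hfcont
    set F := dist (γ xs) (γ t₀) ^ 2 with hF
    have hF0 : 0 ≤ F := sq_nonneg _
    set C := 2*K*h + |κ| * F with hC
    have hC0 : 0 ≤ C := by
      have := abs_nonneg κ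
      nlinarith
    have hbound : ∀ x ∈ Set.Ico t₀ xs, diniUR (fun s => dist (γ s) (γ t₀) ^ 2) x ≤ (C : EReal) := by
      intro x hx
      have hx0 : 0 < x := lt_of_lt_of_le ht₀pos hx.1
      have hxIcc : x ∈ Set.Icc t₀ (t₀ + h) := ⟨hx.1, le_trans hx.2.le hxs.2⟩
      refine le_trans (hdini (γ t₀) (hfin t₀ ht₀pos) x hx0) ?_
      apply EReal.coe_le_coe_iff.mpr
      have hrec := hrecord h ⟨hh0, hhδ₀⟩ x hxIcc
      have hfx : dist (γ x) (γ t₀) ^ 2 ≤ F := hmax hxIcc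
      have hfx0 : (0:ℝ) ≤ dist (γ x) (γ t₀) ^ 2 := sq_nonneg _
      have het₀ : (En (γ t₀)).toReal = e t₀ := (heq t₀).symm
      rw [het₀]
      nlinarith [le_abs_self κ, neg_abs_le κ]
    have hcmp := diniUR_le_const_imp hxs.1
      (hfcont.mono (Set.Icc_subset_Icc le_rfl hxs.2)) hbound
    have hft₀ : dist (γ t₀) (γ t₀) ^ 2 = 0 := by simp [dist_self]
    rw [hft₀, zero_add] at hcmp
    have hFC : F ≤ C * h := by
      have hxsle : xs - t₀ ≤ h := by linarith [hxs.2]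
      nlinarith [hxs.1]
    have hF4 : F ≤ 4*K*h^2 := by
      nlinarith [mul_le_mul_of_nonneg_right hhκ hF0]
    have hfh : dist (γ (t₀+h)) (γ t₀) ^ 2 ≤ 4*K*h^2 :=
      le_trans (hmax ⟨by linarith, le_rfl⟩) hF4
    have hVh : 0 ≤ V * h := by positivity
    have hV2 : V^2 = 4*K := by
      rw [hV, mul_pow, Real.sq_sqrt hK0]; ring
    have h4 : dist (γ (t₀+h)) (γ t₀) ^ 2 ≤ (V*h)^2 := by
      rw [mul_pow, hV2]; linarith [hfh]
    calc dist (γ (t₀+h)) (γ t₀) = Real.sqrt (dist (γ (t₀+h)) (γ t₀) ^ 2) :=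
          (Real.sqrt_sq dist_nonneg).symm
      _ ≤ Real.sqrt ((V*h)^2) := Real.sqrt_le_sqrt h4
      _ = V*h := Real.sqrt_sq hVh
  -- global quadratic lower bound for En
  obtain ⟨A, hA⟩ : ∃ x : ℝ, x = e t₀ - V^2*δ₁/2 := ⟨_, rfl⟩
  have hlower : ∀ x : E,
      ((A + κ/2 * dist (γ t₀) x ^ 2 - V * dist (γ t₀) x : ℝ) : EReal) ≤ En x := by
    intro x
    by_cases hx : En x = ⊤
    · rw [hx]; exact le_top
    · have hxlt : En x < ⊤ := lt_top_iff_ne_top.mpr hx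
      have hdx := hdini x hxlt t₀ ht₀pos
      have hlow : ((-(V * (2 * dist (γ t₀) x + V * δ₁)) : ℝ) : EReal)
          ≤ diniUR (fun s => dist (γ s) x ^ 2) t₀ := by
        refine le_limsup_of_frequently_le (Eventually.frequently ?_) (by isBoundedDefault)
        filter_upwards [Ioc_mem_nhdsGT_of_mem (Set.mem_Ico.mpr ⟨le_rfl, hδ₁pos⟩)] with h hh
        apply EReal.coe_le_coe_iff.mpr
        have hsp := hspeed h hh
        have h1 : |dist (γ (t₀ + h)) x - dist (γ t₀) x| ≤ dist (γ (t₀ + h)) (γ t₀) :=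
          abs_dist_sub_le _ _ _
        have h2 := abs_le.mp (h1.trans hsp)
        rw [le_div_iff₀ hh.1]
        have hd0 : (0:ℝ) ≤ dist (γ t₀) x := dist_nonneg
        have hd1 : (0:ℝ) ≤ dist (γ (t₀+h)) x := dist_nonneg
        have hVh : (0:ℝ) ≤ V * h := mul_nonneg hV0 hh.1.le
        have e1 : dist (γ (t₀+h)) x + dist (γ t₀) x ≤ 2 * dist (γ t₀) x + V * δ₁ := by
          have := mul_le_mul_of_nonneg_left hh.2 hV0
          linarith [h2.2]
        have e3 : -(V*h) * (dist (γ (t₀+h)) x + dist (γ t₀) x)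
            ≤ (dist (γ (t₀+h)) x - dist (γ t₀) x) * (dist (γ (t₀+h)) x + dist (γ t₀) x) :=
          mul_le_mul_of_nonneg_right h2.1 (by linarith)
        have e4 : -(V*h) * (2 * dist (γ t₀) x + V * δ₁)
            ≤ -(V*h) * (dist (γ (t₀+h)) x + dist (γ t₀) x) := by
          have := mul_le_mul_of_nonneg_left e1 hVh
          linarith
        nlinarith [e3, e4]
      have hcomb := le_trans hlow hdx
      have hreal := EReal.coe_le_coe_iff.mp hcomb
      rw [← EReal.coe_toReal hx (hbot x)]
      apply EReal.coe_le_coe_iff.mpr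
      rw [hA]
      linarith
  -- Part 1 : D(En) ⊆ closure D(I)
  have part1 : {π : E | En π < ⊤} ⊆ closure {π : E | info En π < ⊤} := by
    intro π hπ
    have hπ' : En π < ⊤ := hπ
    rw [Metric.mem_closure_iff]
    intro ε hε
    obtain ⟨c, hc⟩ : ∃ c : ℝ, c = |κ|/2 + 1 := ⟨_, rfl⟩
    have hc0 : (0:ℝ) ≤ c := by rw [hc]; positivity
    have hcκ : (1:ℝ) ≤ κ/2 + c := by
      have := neg_abs_le κ
      rw [hc]; linarith
    set G : E → EReal := fun x => En x + ((c * dist (γ t₀) x ^ 2 : ℝ) : EReal) with hG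
    have hGlsc : LowerSemicontinuous G :=
      lsc_add_cont hbot hlsc
        (continuous_const.mul ((continuous_const.dist continuous_id).pow 2))
    obtain ⟨m, hm⟩ : ∃ x : ℝ, x = A - V^2/4 := ⟨_, rfl⟩
    have hGm : ∀ x, ((m:ℝ):EReal) ≤ G x := by
      intro x
      by_cases hx : En x = ⊤
      · have : G x = ⊤ := by rw [hG]; simp only; rw [hx, EReal.top_add_coe]
        rw [this]; exact le_top
      · have hex : A + κ/2 * dist (γ t₀) x ^ 2 - V * dist (γ t₀) x ≤ (En x).toReal := by
          have h' := hlower x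
          rw [← EReal.coe_toReal hx (hbot x)] at h'
          exact EReal.coe_le_coe_iff.mp h'
        have hGx : G x = (((En x).toReal + c * dist (γ t₀) x ^ 2 : ℝ) : EReal) := by
          rw [hG]; simp only
          rw [EReal.coe_add]
          congr 1
          exact (EReal.coe_toReal hx (hbot x)).symm
        rw [hGx]
        apply EReal.coe_le_coe_iff.mpr
        have hd0 : (0:ℝ) ≤ dist (γ t₀) x := dist_nonneg
        nlinarith [hex, hm, sq_nonneg (dist (γ t₀) x - V/2),
          mul_nonneg (show (0:ℝ) ≤ κ/2 + c - 1 by linarith) (sq_nonneg (dist (γ t₀) x))]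
    have hGπ : G π ≠ ⊤ := by
      rw [hG]
      show En π + ((c * dist (γ t₀) π ^ 2 : ℝ) : EReal) ≠ ⊤
      exact ereal_add_real_ne_top hπ'.ne _
    have hGπb : G π ≠ ⊥ := by
      rw [hG]
      show En π + ((c * dist (γ t₀) π ^ 2 : ℝ) : EReal) ≠ ⊥
      exact ereal_add_real_ne_bot (hbot π) _
    obtain ⟨gp, hgp⟩ : ∃ x : ℝ, x = (G π).toReal := ⟨_, rfl⟩
    have hgpm : m ≤ gp := by
      have := hGm π
      rw [← EReal.coe_toReal hGπ hGπb] at this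
      rw [hgp]
      exact EReal.coe_le_coe_iff.mp this
    obtain ⟨ε', hε'⟩ : ∃ x : ℝ, x = min ε 1 / 2 := ⟨_, rfl⟩
    have hε'pos : 0 < ε' := by
      rw [hε']
      have : 0 < min ε 1 := lt_min hε one_pos
      linarith
    have hε'lt : ε' < ε := by
      rw [hε']
      have h1 : min ε 1 ≤ ε := min_le_left _ _
      linarith
    obtain ⟨lam, hlam'⟩ : ∃ x : ℝ, x = (gp - m)/ε' + 1 := ⟨_, rfl⟩
    have hlam : 0 < lam := by
      have : 0 ≤ (gp - m)/ε' := div_nonneg (by linarith) hε'pos.le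
      rw [hlam']; linarith
    obtain ⟨q, hq1, hq2, hq3⟩ := ekeland_ereal hGlsc hGm hGπ hlam
    have hGqb : G q ≠ ⊥ := by
      intro hcon
      have := hGm q
      rw [hcon] at this
      exact absurd this (by simp)
    have hGqm : m ≤ (G q).toReal := by
      have := hGm q
      rw [← EReal.coe_toReal hq1 hGqb] at this
      exact EReal.coe_le_coe_iff.mp this
    have hdistq : dist π q < ε := by
      have h1 : lam * dist π q ≤ gp - m := by
        rw [hgp]
        linarith [hq2, hGqm]
      have h2 : lam * ε' > gp - m := by
        have h3 : ((gp - m)/ε') * ε' = gp - m := div_mul_cancel₀ _ hε'pos.ne'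
        rw [hlam']
        nlinarith
      have hd : dist π q < ε' := by
        by_contra hcon
        push_neg at hcon
        have := mul_le_mul_of_nonneg_left hcon hlam.le
        nlinarith
      linarith
    -- finite slope at q
    have hEq : En q ≠ ⊤ := by
      intro hcon
      apply hq1
      rw [hG]; simp only
      rw [hcon, EReal.top_add_coe]
    have hGqval : (G q).toReal = (En q).toReal + c * dist (γ t₀) q ^ 2 := by
      rw [hG]; simp only
      rw [EReal.toReal_add hEq (hbot q) (EReal.coe_ne_top _) (EReal.coe_ne_bot _),
        EReal.toReal_coe]
    have hineq2 : ∀ x, En q ≤ En x +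
        ((lam * dist x q + c * (dist (γ t₀) x ^ 2 - dist (γ t₀) q ^ 2) : ℝ) : EReal) := by
      intro x
      by_cases hx : En x = ⊤
      · rw [hx, EReal.top_add_coe]; exact le_top
      · have h3 := hq3 x
        have hGx : G x = (((En x).toReal + c * dist (γ t₀) x ^ 2 : ℝ) : EReal) := by
          rw [hG]; simp only
          rw [EReal.coe_add]
          congr 1
          exact (EReal.coe_toReal hx (hbot x)).symm
        rw [hGx] at h3
        have hr := EReal.coe_le_coe_iff.mp h3
        rw [hGqval] at hr
        rw [← EReal.coe_toReal hEq (hbot q), ← EReal.coe_toReal hx (hbot x), ← EReal.coe_add]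
        apply EReal.coe_le_coe_iff.mpr
        linarith
    have hslopeq : localSlope En q < ⊤ :=
      slope_finite hbot hEq hc0 hlam.le hineq2
    refine ⟨q, ?_, hdistq⟩
    rw [Set.mem_setOf_eq, info]
    exact ENNReal.pow_lt_top hslopeq
  -- Part 3 : D(En) is dense
  have part3 : Dense {π : E | En π < ⊤} := by
    intro x
    have hcx := (hflow.evi x).1
    have h0 : ContinuousWithinAt (fun t => S t x) (Set.Ici (0:ℝ)) 0 :=
      hcx 0 Set.self_mem_Ici
    have htend : Tendsto (fun t => S t x) (𝓝[>] (0:ℝ)) (𝓝 x) := by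
      have h1 := h0.tendsto
      rw [hflow.id0 x] at h1
      exact h1.mono_left (nhdsWithin_mono _ Set.Ioi_subset_Ici_self)
    apply mem_closure_of_tendsto htend
    filter_upwards [eventually_mem_nhdsWithin] with t ht
    exact (hflow.evi x).2.1 t ht
  refine ⟨part1, ?_, part3⟩
  intro x
  have h1 : closure {π : E | En π < ⊤} ⊆ closure {π : E | info En π < ⊤} := by
    have := closure_mono part1
    rwa [closure_closure] at this
  exact h1 (part3 x)
end

section
/- Existence of an EVI_κ gradient flow implies strong κ-convexity (Theorem 5.2, Daneri–Savaré): Let (E,d) be a geodesic metric space, let 𝓔 : E → (−∞,+∞] be lower semicontinuous, fix κ ∈ ℝ, and suppose there exists an EVI_κ gradient flow of 𝓔 (a semigroup S(t):E→E of continuous maps with S(0)π=π, S(t+s)π=S(s)(S(t)π), whose trajectories t↦S(t)π solve the EVI_κ inequality). Then 𝓔 is strongly κ-convex: for every geodesic γ : [0,1] → E with 𝓔(γ(0)) < ∞ and 𝓔(γ(1)) < ∞, and every t ∈ [0,1], 𝓔(γ(t)) ≤ (1−t)·𝓔(γ(0)) + t·𝓔(γ(1)) − (κ/2)·t(1−t)·d²(γ(0),γ(1)).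 -/
open Filter Topology MeasureTheory
open scoped ENNReal

lemma half_coe' : (1/2 : EReal) = ((1/2 : ℝ) : EReal) := by
  rw [one_div, one_div, EReal.coe_inv]; norm_cast

lemma half_pos'' : (0 : EReal) < 1/2 := by
  rw [half_coe', ← EReal.coe_zero, EReal.coe_lt_coe_iff]; norm_num

lemma half_mul_le_bot' {x : EReal} (h : (1/2 : EReal) * x ≤ ⊥) : x = ⊥ := by
  induction x using EReal.rec with
  | bot => rfl
  | coe r =>
      rw [half_coe', ← EReal.coe_mul, le_bot_iff] at h
      exact absurd h (EReal.coe_ne_bot _)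
  | top =>
      rw [mul_comm, EReal.top_mul_of_pos half_pos'', le_bot_iff] at h
      exact absurd h (by simp)

lemma half_mul_le_coe' {x : EReal} {r : ℝ} (h : (1/2 : EReal) * x ≤ (r : EReal)) :
    x ≤ ((2 * r : ℝ) : EReal) := by
  induction x using EReal.rec with
  | bot => exact bot_le
  | coe s =>
      rw [half_coe', ← EReal.coe_mul, EReal.coe_le_coe_iff] at h
      rw [EReal.coe_le_coe_iff]; linarith
  | top =>
      rw [mul_comm, EReal.top_mul_of_pos half_pos''] at h
      exact absurd (top_le_iff.mp h) (EReal.coe_ne_top _)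

/-- Existence of an EVI_κ gradient flow implies strong κ-convexity
(Theorem 5.2, Daneri–Savaré). -/
theorem EVI_flow_implies_strong_convexity
    {E : Type*} [MetricSpace E]
    (hgeo : GeodesicSpace E)
    (En : E → EReal) (hbot : ∀ π : E, En π ≠ ⊥)
    (hlsc : LowerSemicontinuous En)
    (κ : ℝ) (S : ℝ → E → E) (hflow : IsEVIFlow En κ S) :
    ∀ γ : ℝ → E,
      (∀ s ∈ Set.Icc (0:ℝ) 1, ∀ t ∈ Set.Icc (0:ℝ) 1,
        dist (γ s) (γ t) = |t - s| * dist (γ 0) (γ 1)) →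
      En (γ 0) < ⊤ → En (γ 1) < ⊤ →
      ∀ t ∈ Set.Icc (0:ℝ) 1,
        En (γ t) ≤ ((1 - t : ℝ) : EReal) * En (γ 0) + ((t : ℝ) : EReal) * En (γ 1)
          - ((κ / 2 * (t * (1 - t)) * dist (γ 0) (γ 1) ^ 2 : ℝ) : EReal) := by
  intro γ hγ h0 h1 t ht
  obtain ⟨ht0, ht1⟩ := ht
  set L := dist (γ 0) (γ 1) with hLdef
  have hL : 0 ≤ L := dist_nonneg
  have h1t : (0:ℝ) ≤ 1 - t := by linarith
  have hmem0 : (0:ℝ) ∈ Set.Icc (0:ℝ) 1 := by constructor <;> norm_num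
  have hmem1 : (1:ℝ) ∈ Set.Icc (0:ℝ) 1 := by constructor <;> norm_num
  have hdt0 : dist (γ t) (γ 0) = t * L := by
    rw [hγ t ⟨ht0, ht1⟩ 0 hmem0, zero_sub, abs_neg, abs_of_nonneg ht0]
  have hdt1 : dist (γ t) (γ 1) = (1 - t) * L := by
    rw [hγ t ⟨ht0, ht1⟩ 1 hmem1, abs_of_nonneg h1t]
  have hA := (hflow.evi (γ t)).2.2 (γ 0) h0 0 le_rfl
  have hB := (hflow.evi (γ t)).2.2 (γ 1) h1 0 le_rfl
  simp only [diniUR, zero_add, hflow.id0, hdt0, hdt1] at hA hB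
  -- the weighted square distance is minimized at h = 0
  have key : ∀ h : ℝ, 0 < h →
      0 ≤ (1-t) * ((dist (S h (γ t)) (γ 0)^2 - (t*L)^2)/h)
          + t * ((dist (S h (γ t)) (γ 1)^2 - ((1-t)*L)^2)/h) := by
    intro h hh
    have htri : L ≤ dist (S h (γ t)) (γ 0) + dist (S h (γ t)) (γ 1) := by
      calc L = dist (γ 0) (γ 1) := hLdef
        _ ≤ dist (γ 0) (S h (γ t)) + dist (S h (γ t)) (γ 1) := dist_triangle _ _ _
        _ = _ := by rw [dist_comm (γ 0)]
    set a := dist (S h (γ t)) (γ 0) with ha'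
    set b := dist (S h (γ t)) (γ 1) with hb'
    have ha : 0 ≤ a := dist_nonneg
    have hb : 0 ≤ b := dist_nonneg
    have hnum : 0 ≤ (1-t) * (a^2 - (t*L)^2) + t * (b^2 - ((1-t)*L)^2) := by
      nlinarith [sq_nonneg ((1-t)*a - t*b),
        mul_nonneg (mul_nonneg ht0 h1t)
          (mul_nonneg (by linarith : (0:ℝ) ≤ a + b + L) (by linarith : (0:ℝ) ≤ a + b - L))]
    have : (1-t) * ((a^2 - (t*L)^2)/h) + t * ((b^2 - ((1-t)*L)^2)/h)
        = ((1-t) * (a^2 - (t*L)^2) + t * (b^2 - ((1-t)*L)^2)) / h := by ring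
    rw [this]
    exact div_nonneg hnum hh.le
  -- finiteness of En (γ t)
  have hfin : En (γ t) ≠ ⊤ := by
    intro htop
    rcases eq_or_lt_of_le ht0 with h0t | h0t
    · rw [← h0t] at htop; exact h0.ne htop
    rcases eq_or_lt_of_le ht1 with ht1' | ht1'
    · rw [ht1'] at htop; exact h1.ne htop
    rw [htop, EReal.sub_top, EReal.bot_sub] at hA hB
    have hA' := half_mul_le_bot' hA
    have hB' := half_mul_le_bot' hB
    have eA : ∀ᶠ h in 𝓝[>] (0:ℝ),
        (((dist (S h (γ t)) (γ 0)^2 - (t*L)^2)/h : ℝ) : EReal) < ((0:ℝ) : EReal) :=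
      eventually_lt_of_limsup_lt (by rw [hA']; exact EReal.bot_lt_coe 0)
    have eB : ∀ᶠ h in 𝓝[>] (0:ℝ),
        (((dist (S h (γ t)) (γ 1)^2 - ((1-t)*L)^2)/h : ℝ) : EReal) < ((0:ℝ) : EReal) :=
      eventually_lt_of_limsup_lt (by rw [hB']; exact EReal.bot_lt_coe 0)
    have eP : ∀ᶠ h in 𝓝[>] (0:ℝ), (0:ℝ) < h :=
      eventually_mem_nhdsWithin
    obtain ⟨h, hh1, hh2, hh3⟩ := (eA.and (eB.and eP)).exists
    have s0 : (dist (S h (γ t)) (γ 0)^2 - (t*L)^2)/h < 0 := by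
      have := EReal.coe_lt_coe_iff.mp hh1; linarith
    have s1 : (dist (S h (γ t)) (γ 1)^2 - ((1-t)*L)^2)/h < 0 := by
      have := EReal.coe_lt_coe_iff.mp hh2; linarith
    have := key h hh3
    nlinarith [mul_pos (by linarith : (0:ℝ) < 1 - t) (neg_pos.mpr s0),
      mul_pos h0t (neg_pos.mpr s1)]
  -- extract real values
  obtain ⟨et, het⟩ : ∃ r : ℝ, En (γ t) = (r : EReal) :=
    ⟨(En (γ t)).toReal, (EReal.coe_toReal hfin (hbot _)).symm⟩
  obtain ⟨e0, he0⟩ : ∃ r : ℝ, En (γ 0) = (r : EReal) :=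
    ⟨(En (γ 0)).toReal, (EReal.coe_toReal h0.ne (hbot _)).symm⟩
  obtain ⟨e1, he1⟩ : ∃ r : ℝ, En (γ 1) = (r : EReal) :=
    ⟨(En (γ 1)).toReal, (EReal.coe_toReal h1.ne (hbot _)).symm⟩
  rw [he0, het, ← EReal.coe_sub, ← EReal.coe_sub] at hA
  rw [he1, het, ← EReal.coe_sub, ← EReal.coe_sub] at hB
  have hA' := half_mul_le_coe' hA
  have hB' := half_mul_le_coe' hB
  set B0 : ℝ := 2 * (e0 - et - κ / 2 * (t*L)^2) with hB0def
  set B1 : ℝ := 2 * (e1 - et - κ / 2 * ((1-t)*L)^2) with hB1def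
  have claim : 0 ≤ (1-t) * B0 + t * B1 := by
    by_contra hneg
    push_neg at hneg
    set ε : ℝ := -((1-t) * B0 + t * B1)/2 with hεdef
    have hε : 0 < ε := by rw [hεdef]; linarith
    have eA : ∀ᶠ h in 𝓝[>] (0:ℝ),
        (((dist (S h (γ t)) (γ 0)^2 - (t*L)^2)/h : ℝ) : EReal) < ((B0 + ε : ℝ) : EReal) :=
      eventually_lt_of_limsup_lt
        (lt_of_le_of_lt hA' (EReal.coe_lt_coe_iff.mpr (by linarith)))
    have eB : ∀ᶠ h in 𝓝[>] (0:ℝ),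
        (((dist (S h (γ t)) (γ 1)^2 - ((1-t)*L)^2)/h : ℝ) : EReal) < ((B1 + ε : ℝ) : EReal) :=
      eventually_lt_of_limsup_lt
        (lt_of_le_of_lt hB' (EReal.coe_lt_coe_iff.mpr (by linarith)))
    have eP : ∀ᶠ h in 𝓝[>] (0:ℝ), (0:ℝ) < h :=
      eventually_mem_nhdsWithin
    obtain ⟨h, hh1, hh2, hh3⟩ := (eA.and (eB.and eP)).exists
    have s0 : (dist (S h (γ t)) (γ 0)^2 - (t*L)^2)/h < B0 + ε :=
      EReal.coe_lt_coe_iff.mp hh1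
    have s1 : (dist (S h (γ t)) (γ 1)^2 - ((1-t)*L)^2)/h < B1 + ε :=
      EReal.coe_lt_coe_iff.mp hh2
    have hk := key h hh3
    nlinarith [mul_le_mul_of_nonneg_left s0.le h1t, mul_le_mul_of_nonneg_left s1.le ht0]
  rw [het, he0, he1, ← EReal.coe_mul, ← EReal.coe_mul, ← EReal.coe_add, ← EReal.coe_sub,
    EReal.coe_le_coe_iff]
  nlinarith [claim]
end

section
/- Ekeland's variational principle for a quasi-distance (Lemma A.1, parts (1), (2), (a)): Let K be a nonempty set and B : K × K → [0,+∞) satisfy: (i) B(x,x) = 0 for all x; (ii) B(x,z) ≤ B(x,y) + B(y,z) for all x,y,z; (iii) for any sequence (xₙ) in K with Σₙ B(xₙ₊₁, xₙ) < ∞ there exists x ∈ K with limₙ B(x,xₙ) = 0. Let G : K → [−∞,+∞) be bounded above, and assume that whenever (xₙ) is a sequence in K and x ∈ K with Σₙ B(xₙ₊₁,xₙ) < ∞ and limₙ B(x,xₙ) = 0, one has G(x) ≥ limsupₙ G(xₙ). Then for each δ > 0 and each x̂ ∈ K with G(x̂) ≠ −∞ there exists x_δ ∈ K such that: (1) G(x̂)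 + (δ/2)·B(x_δ, x̂) ≤ G(x_δ); (2) for all x ∈ K, G(x) − (δ/2)·B(x, x_δ) ≤ G(x_δ). Moreover, (a) if in addition G(x̂) ≥ sup_{x∈K} G(x) − (1/2)δ², then B(x_δ, x̂) ≤ δ. -/
open Filter Topology

/-- Ekeland's variational principle for a quasi-distance (Lemma A.1, parts (1), (2), (a)). -/
theorem ekeland_principle
    {K : Type*} [Nonempty K]
    (B : K → K → ℝ)
    (hBnn : ∀ x y : K, 0 ≤ B x y)
    (hB0 : ∀ x : K, B x x = 0)
    (hBtri : ∀ x y z : K, B x z ≤ B x y + B y z)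
    (hBcomplete : ∀ x : ℕ → K, Summable (fun n => B (x (n + 1)) (x n)) →
      ∃ p : K, Filter.Tendsto (fun n => B p (x n)) Filter.atTop (𝓝 0))
    (G : K → EReal)
    (hGbdd : ∃ M : ℝ, ∀ x : K, G x ≤ (M : EReal))
    (hGusc : ∀ (x : ℕ → K) (p : K), Summable (fun n => B (x (n + 1)) (x n)) →
      Filter.Tendsto (fun n => B p (x n)) Filter.atTop (𝓝 0) →
      Filter.limsup (fun n => G (x n)) Filter.atTop ≤ G p)
    (δ : ℝ) (hδ : 0 < δ) (x' : K) (hx' : G x' ≠ ⊥) :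
    ∃ xδ : K,
      G x' + ((δ / 2 * B xδ x' : ℝ) : EReal) ≤ G xδ ∧
      (∀ x : K, G x - ((δ / 2 * B x xδ : ℝ) : EReal) ≤ G xδ) ∧
      ((⨆ x : K, G x) - ((1 / 2 * δ ^ 2 : ℝ) : EReal) ≤ G x' → B xδ x' ≤ δ) := by
  obtain ⟨M, hM⟩ := hGbdd
  have hc : (0:ℝ) < δ / 2 := by positivity
  -- Step: near-supremum selection on the set S_y = {w | G y + (δ/2) B(w,y) ≤ G w}
  have hstep : ∀ (ε : ℝ), 0 < ε → ∀ y : K, ∃ z : K,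
      (G y + ((δ/2 * B z y : ℝ) : EReal) ≤ G z) ∧
      ∀ w : K, (G y + ((δ/2 * B w y : ℝ) : EReal) ≤ G w) → G w ≤ G z + ((ε : ℝ) : EReal) := by
    intro ε hε y
    set S : Set K := {w | G y + ((δ/2 * B w y : ℝ) : EReal) ≤ G w} with hS
    have hyS : y ∈ S := by
      simp only [hS, Set.mem_setOf_eq, hB0, mul_zero, EReal.coe_zero, add_zero, le_refl]
    set s : EReal := ⨆ w ∈ S, G w with hsdef
    have hsleM : s ≤ (M : EReal) := iSup₂_le fun w _ => hM w
    by_cases hbot : s = ⊥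
    · refine ⟨y, hyS, fun w hw => ?_⟩
      have h1 : G w ≤ s := le_iSup₂ (f := fun w _ => G w) w hw
      rw [hbot] at h1
      exact le_trans h1 bot_le
    · have hstop : s ≠ ⊤ := fun h => by simp [h] at hsleM
      obtain ⟨sr, hsr⟩ : ∃ r : ℝ, s = (r : EReal) := ⟨s.toReal, (EReal.coe_toReal hstop hbot).symm⟩
      have hlt : ((sr - ε : ℝ) : EReal) < s := by
        rw [hsr]; exact_mod_cast sub_lt_self sr hε
      obtain ⟨z, hzS, hz⟩ : ∃ z ∈ S, ((sr - ε : ℝ) : EReal) < G z := by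
        by_contra h
        push_neg at h
        have h2 : s ≤ ((sr - ε : ℝ) : EReal) := iSup₂_le h
        exact absurd (h2.trans_lt hlt) (lt_irrefl _)
      refine ⟨z, hzS, fun w hw => ?_⟩
      calc G w ≤ s := le_iSup₂ (f := fun w _ => G w) w hw
        _ = ((sr - ε : ℝ) : EReal) + ((ε : ℝ) : EReal) := by
            rw [hsr, ← EReal.coe_add]; norm_num
        _ ≤ G z + ((ε : ℝ) : EReal) := add_le_add_left hz.le _
  have hstep' : ∀ (n : ℕ) (y : K), ∃ z : K,
      (G y + ((δ/2 * B z y : ℝ) : EReal) ≤ G z) ∧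
      ∀ w : K, (G y + ((δ/2 * B w y : ℝ) : EReal) ≤ G w) →
        G w ≤ G z + ((((1:ℝ)/2)^n : ℝ) : EReal) :=
    fun n y => hstep (((1:ℝ)/2)^n) (by positivity) y
  choose next hn1 hn2 using hstep'
  obtain ⟨u, hu0, hus⟩ : ∃ u : ℕ → K, u 0 = x' ∧ ∀ n, u (n+1) = next n (u n) :=
    ⟨fun n => Nat.rec x' (fun n un => next n un) n, rfl, fun n => rfl⟩
  have H1 : ∀ n, G (u n) + ((δ/2 * B (u (n+1)) (u n) : ℝ) : EReal) ≤ G (u (n+1)) := by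
    intro n; rw [hus n]; exact hn1 n (u n)
  have H2 : ∀ n w, G (u n) + ((δ/2 * B w (u n) : ℝ) : EReal) ≤ G w →
      G w ≤ G (u (n+1)) + ((((1:ℝ)/2)^n : ℝ) : EReal) := by
    intro n w hw; rw [hus n]; exact hn2 n (u n) w hw
  have hmono : Monotone fun n => G (u n) := by
    apply monotone_nat_of_le_succ
    intro n
    refine le_trans ?_ (H1 n)
    exact le_add_of_nonneg_right (by exact_mod_cast mul_nonneg hc.le (hBnn _ _))
  have hnb : ∀ n, G (u n) ≠ ⊥ := by
    intro n h
    apply hx'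
    have h0 : G (u 0) ≤ G (u n) := hmono (Nat.zero_le n)
    rw [h] at h0
    rw [← hu0]
    exact le_bot_iff.1 h0
  have hnt : ∀ x : K, G x ≠ ⊤ := fun x => ((hM x).trans_lt (EReal.coe_lt_top M)).ne
  set g : ℕ → ℝ := fun n => (G (u n)).toReal with hgdef
  have hg : ∀ n, G (u n) = ((g n : ℝ) : EReal) := fun n =>
    (EReal.coe_toReal (hnt _) (hnb n)).symm
  have hgM : ∀ n, g n ≤ M := fun n => by
    have := hM (u n); rw [hg n] at this; exact_mod_cast this
  set b : ℕ → ℝ := fun n => B (u (n+1)) (u n) with hbdef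
  have H1' : ∀ n, g n + δ/2 * b n ≤ g (n+1) := by
    intro n
    have := H1 n
    rw [hg n, hg (n+1), ← EReal.coe_add] at this
    exact_mod_cast this
  have hsum : ∀ N, δ/2 * (∑ k ∈ Finset.range N, b k) ≤ g N - g 0 := by
    intro N
    induction N with
    | zero => simp
    | succ N ih =>
        rw [Finset.sum_range_succ, mul_add]
        have := H1' N
        linarith
  have hbsum : Summable b := by
    refine summable_of_sum_range_le (c := (M - g 0) / (δ/2)) (fun n => hBnn _ _) (fun N => ?_)
    show ∑ k ∈ Finset.range N, b k ≤ (M - g 0) / (δ/2)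
    rw [le_div_iff₀ hc, mul_comm]
    linarith [hsum N, hgM N]
  obtain ⟨p, hp⟩ := hBcomplete u hbsum
  have hls : Filter.limsup (fun n => G (u n)) Filter.atTop ≤ G p := hGusc u p hbsum hp
  have hple : ∀ n, G (u n) ≤ G p := by
    intro n
    refine le_trans ?_ hls
    apply le_limsup_of_frequently_le'
    exact ((eventually_atTop.2 ⟨n, fun m hm => hmono hm⟩).frequently)
  have hpnb : G p ≠ ⊥ := fun h => hnb 0 (le_bot_iff.1 (h ▸ hple 0))
  set gp : ℝ := (G p).toReal with hgpdef
  have hgp : G p = ((gp : ℝ) : EReal) := (EReal.coe_toReal (hnt _) hpnb).symm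
  have hgle : ∀ n, g n ≤ gp := fun n => by
    have := hple n; rw [hg n, hgp] at this; exact_mod_cast this
  -- tail sums
  set T : ℕ → ℝ := fun n => ∑' k, b (n + k) with hTdef
  have htail : ∀ n, Summable fun k => b (n + k) := fun n =>
    ((summable_nat_add_iff n).2 hbsum).congr (fun k => by rw [add_comm])
  have hBpT : ∀ n, B p (u n) ≤ T n := by
    intro n
    have hstepm : ∀ m, B p (u n) ≤ B p (u (n + m)) + ∑ k ∈ Finset.range m, b (n + k) := by
      intro m
      induction m with
      | zero => simp
      | succ m ih =>
          rw [Finset.sum_range_succ]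
          have htr := hBtri p (u (n + m + 1)) (u (n + m))
          have : B p (u (n+m)) ≤ B p (u (n + (m+1))) + b (n + m) := by
            rw [show n + (m+1) = n + m + 1 by ring]
            exact htr
          linarith
    have htend : Filter.Tendsto
        (fun m => B p (u (n + m)) + ∑ k ∈ Finset.range m, b (n + k))
        Filter.atTop (𝓝 (0 + T n)) := by
      apply Filter.Tendsto.add
      · exact hp.comp (Filter.Tendsto.nonneg_add_atTop (fun _ => Nat.zero_le n) tendsto_id)
      · exact (htail n).hasSum.tendsto_sum_nat
    rw [zero_add] at htend
    exact ge_of_tendsto' htend hstepm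
  have hkey : ∀ n, g n + δ/2 * B p (u n) ≤ gp := by
    intro n
    have hstepm : ∀ m, g n + δ/2 * ∑ k ∈ Finset.range m, b (n + k) ≤ g (n + m) := by
      intro m
      induction m with
      | zero => simp
      | succ m ih =>
          rw [Finset.sum_range_succ, mul_add]
          have := H1' (n + m)
          have heq : n + (m+1) = (n + m) + 1 := by ring
          rw [heq]
          linarith
    have hboundm : ∀ m, g n + δ/2 * ∑ k ∈ Finset.range m, b (n + k) ≤ gp :=
      fun m => (hstepm m).trans (hgle (n + m))
    have htend : Filter.Tendsto (fun m => g n + δ/2 * ∑ k ∈ Finset.range m, b (n + k))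
        Filter.atTop (𝓝 (g n + δ/2 * T n)) :=
      (tendsto_const_nhds.add (((htail n).hasSum.tendsto_sum_nat).const_mul _))
    have h1 : g n + δ/2 * T n ≤ gp := le_of_tendsto' htend hboundm
    have h2 : δ/2 * B p (u n) ≤ δ/2 * T n :=
      mul_le_mul_of_nonneg_left (hBpT n) hc.le
    linarith
  refine ⟨p, ?_, ?_, ?_⟩
  · -- part (1)
    rw [← hu0, hg 0, hgp, ← EReal.coe_add]
    exact_mod_cast hkey 0
  · -- part (2)
    intro x
    by_contra hcon
    push_neg at hcon
    set r : ℝ := δ/2 * B x p with hrdef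
    have hxnb : G x ≠ ⊥ := by
      intro h
      rw [h] at hcon
      simp only [EReal.bot_sub] at hcon
      exact (not_lt_bot hcon)
    set gx : ℝ := (G x).toReal with hgxdef
    have hgx : G x = ((gx : ℝ) : EReal) := (EReal.coe_toReal (hnt _) hxnb).symm
    have hlt : gp < gx - r := by
      rw [hgp, hgx, ← EReal.coe_sub] at hcon
      exact_mod_cast hcon
    have hrnn : 0 ≤ r := mul_nonneg hc.le (hBnn _ _)
    have hxS : ∀ n, G (u n) + ((δ/2 * B x (u n) : ℝ) : EReal) ≤ G x := by
      intro n
      rw [hg n, hgx, ← EReal.coe_add]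
      have htr := mul_le_mul_of_nonneg_left (hBtri x p (u n)) hc.le
      rw [mul_add] at htr
      have := hkey n
      exact_mod_cast (by nlinarith : g n + δ/2 * B x (u n) ≤ gx)
    have hxle : ∀ n, gx ≤ gp + ((1:ℝ)/2)^n := by
      intro n
      have := H2 n x (hxS n)
      rw [hg (n+1), hgx, ← EReal.coe_add] at this
      have h' : gx ≤ g (n+1) + ((1:ℝ)/2)^n := by exact_mod_cast this
      have := hgle (n+1)
      linarith
    have hfinal : gx ≤ gp := by
      have htend : Filter.Tendsto (fun n : ℕ => gp + ((1:ℝ)/2)^n) Filter.atTop (𝓝 (gp + 0)) :=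
        tendsto_const_nhds.add (tendsto_pow_atTop_nhds_zero_of_lt_one (by norm_num) (by norm_num))
      rw [add_zero] at htend
      exact ge_of_tendsto' htend hxle
    linarith
  · -- part (a)
    intro hsup
    have h1 : G p ≤ ⨆ x : K, G x := le_iSup G p
    have h2 : (⨆ x : K, G x) ≤ G x' + ((1/2 * δ^2 : ℝ) : EReal) :=
      (EReal.sub_le_iff_le_add (Or.inl (EReal.coe_ne_bot _)) (Or.inl (EReal.coe_ne_top _))).1 hsup
    have h3 : G p ≤ G x' + ((1/2 * δ^2 : ℝ) : EReal) := h1.trans h2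
    rw [hgp, ← hu0, hg 0, ← EReal.coe_add] at h3
    have h4 : gp ≤ g 0 + 1/2 * δ^2 := by exact_mod_cast h3
    have h5 := hkey 0
    rw [hu0] at h5
    nlinarith
end
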